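/- Let N ≥ 1 and H ≥ 1 be integers, let 0 < L ≤ U be reals with κ = U/L, and let x_1, …, x_M ∈ ℝ^N (M ≥ 1) be vectors all of whose entries lie in [H·L, H·U]. Fix nonzero reals p < q ≤ 1, and let j_p ∈ {1, …, M} be an index maximizing f(x_j, p) over j, where f(x, p) = ((1/N)·∑_{i=1}^N x_i^p)^{1/p}. Then the maximizer at p is nearly optimal at q: max_{j ∈ {1,…,M}} f(x_j, q) − f(x_{j_p}, q) ≤ (q − p)·U·H·κ·ln κ. -/

import Mathlib

open Real BigOperators Finset

/-- Generalized `p`-mean of a vector `x ∈ ℝ^N` for nonzero real exponent `p`. -/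
noncomputable def pmean {N : ℕ} (x : Fin N → ℝ) (p : ℝ) : ℝ :=
  ((1 / N : ℝ) * ∑ i, x i ^ p) ^ (1 / p)

/-!
Let `X = log z` under the uniform distribution on the coordinates and `ψ` its cumulant generating
function, so that `log (pmean z t) = ψ t / t`. `ψ` is convex with `ψ 0 = 0`, hence the secant slope
`ψ t / t` increases with `t`. Its second derivative is the variance of `X` under an exponentially
tilted distribution, at most `(log κ)² / 4` by Popoviciu's inequality, so `ψ t - (log κ)² t² / 8` is
concave and `ψ t / t - (log κ)² t / 8` decreases. Thus `0 ≤ log f(z, q) - log f(z, p) ≤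
(q - p) (log κ)² / 8`, and since `f(z, q) ≤ f(z, 1) ≤ H U`, the gap `f(z, q) - f(z, p)` is at most
`H U (q - p) (log κ)² / 8 ≤ (q - p) U H κ log κ =: B`. Finally, for every `j`,
`f(x_j, q) ≤ f(x_j, p) + B ≤ f(x_{j_p}, p) + B ≤ f(x_{j_p}, q) + B`.
-/

open Set MeasureTheory ProbabilityTheory

lemma convexOn_univ_of_iteratedDeriv_two_nonneg {f : ℝ → ℝ} (hf : ContDiff ℝ 2 f)
    (h : ∀ t, 0 ≤ iteratedDeriv 2 f t) : ConvexOn ℝ univ f := by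
  refine convexOn_univ_of_deriv2_nonneg (hf.differentiable (by norm_num)) ?_ fun t => ?_
  · rw [← iteratedDeriv_one]
    exact hf.differentiable_iteratedDeriv 1 (by norm_num)
  · rw [← iteratedDeriv_eq_iterate]
    exact h t

lemma concaveOn_univ_sub_mul_sq {f : ℝ → ℝ} {c : ℝ} (hf : ContDiff ℝ 2 f)
    (h : ∀ t, iteratedDeriv 2 f t ≤ 2 * c) : ConcaveOn ℝ univ fun t => f t - c * t ^ 2 := by
  have hsq : ContDiff ℝ 2 fun t : ℝ => c * t ^ 2 := by fun_prop
  rw [← neg_convexOn_iff, show (-fun t => f t - c * t ^ 2) = fun t => -f t + c * t ^ 2 by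
    ext; simp; ring]
  refine convexOn_univ_of_iteratedDeriv_two_nonneg (hf.neg.add hsq) fun t => ?_
  rw [iteratedDeriv_fun_add hf.neg.contDiffAt hsq.contDiffAt, iteratedDeriv_fun_neg,
    iteratedDeriv_const_mul_field, iteratedDeriv_pow]
  norm_num
  linarith [h t]

lemma ConvexOn.div_le_div_of_map_zero {f : ℝ → ℝ} (hf : ConvexOn ℝ univ f) (h0 : f 0 = 0)
    {p q : ℝ} (hp : p ≠ 0) (hq : q ≠ 0) (hpq : p ≤ q) : f p / p ≤ f q / q := by
  simpa [slope_def_field, h0] using hf.slope_mono (mem_univ 0) ⟨mem_univ p, hp⟩ ⟨mem_univ q, hq⟩ hpq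

lemma div_le_div_add_of_concaveOn_sub_mul_sq {f : ℝ → ℝ} {c : ℝ}
    (hf : ConcaveOn ℝ univ fun t => f t - c * t ^ 2) (h0 : f 0 = 0)
    {p q : ℝ} (hp : p ≠ 0) (hq : q ≠ 0) (hpq : p ≤ q) : f q / q ≤ f p / p + c * (q - p) := by
  have hslope : ∀ t ≠ 0, slope (fun t => f t - c * t ^ 2) 0 t = f t / t - c * t := by
    intro t ht
    rw [slope_def_field]
    field_simp
    simp [h0, mul_comm]
  have := hf.slope_anti (mem_univ 0) ⟨mem_univ p, hp⟩ ⟨mem_univ q, hq⟩ hpq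
  rw [hslope p hp, hslope q hq] at this
  linarith

lemma exp_sub_exp_le_exp_mul_sub (x y : ℝ) : exp y - exp x ≤ exp y * (y - x) := by
  have h := mul_le_mul_of_nonneg_left (one_sub_le_exp_neg (y - x)) (exp_pos y).le
  rw [← exp_add, show y + -(y - x) = x by ring] at h
  linarith

section CumulantGeneratingFunction

variable {Ω : Type*} [MeasurableSpace Ω] {μ : Measure Ω} [IsProbabilityMeasure μ] {X : Ω → ℝ}
  {a b : ℝ}

lemma integrableExpSet_eq_univ_of_mem_Icc (hm : AEMeasurable X μ)
    (hb : ∀ᵐ ω ∂μ, X ω ∈ Set.Icc a b) : integrableExpSet X μ = univ :=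
  eq_univ_of_forall fun _ => integrable_exp_mul_of_mem_Icc hm hb

lemma contDiff_cgf_of_mem_Icc (hm : AEMeasurable X μ) (hb : ∀ᵐ ω ∂μ, X ω ∈ Set.Icc a b) :
    ContDiff ℝ 2 (cgf X μ) := by
  have h := analyticOnNhd_cgf (X := X) (μ := μ)
  rw [integrableExpSet_eq_univ_of_mem_Icc hm hb, interior_univ] at h
  exact h.contDiff

/-- The second derivative is the variance of `X` under the tilted measure; Popoviciu bounds it. -/
lemma iteratedDeriv_two_cgf_mem_Icc (hm : AEMeasurable X μ) (hb : ∀ᵐ ω ∂μ, X ω ∈ Set.Icc a b)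
    (t : ℝ) : iteratedDeriv 2 (cgf X μ) t ∈ Set.Icc 0 (((b - a) / 2) ^ 2) := by
  have ht : t ∈ interior (integrableExpSet X μ) := by
    simp [integrableExpSet_eq_univ_of_mem_Icc hm hb]
  have hac := tilted_absolutelyContinuous μ (t * X ·)
  have : IsProbabilityMeasure (μ.tilted (t * X ·)) :=
    isProbabilityMeasure_tilted (integrable_exp_mul_of_mem_Icc hm hb)
  rw [← variance_tilted_mul ht]
  exact ⟨variance_nonneg _ _, variance_le_sq_of_bounded (hac hb) (hm.mono_ac hac)⟩

lemma convexOn_cgf_of_mem_Icc (hm : AEMeasurable X μ) (hb : ∀ᵐ ω ∂μ, X ω ∈ Set.Icc a b) :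
    ConvexOn ℝ univ (cgf X μ) :=
  convexOn_univ_of_iteratedDeriv_two_nonneg (contDiff_cgf_of_mem_Icc hm hb) fun t =>
    (iteratedDeriv_two_cgf_mem_Icc hm hb t).1

lemma concaveOn_cgf_sub_of_mem_Icc (hm : AEMeasurable X μ) (hb : ∀ᵐ ω ∂μ, X ω ∈ Set.Icc a b) :
    ConcaveOn ℝ univ fun t => cgf X μ t - ((b - a) / 2) ^ 2 / 2 * t ^ 2 :=
  concaveOn_univ_sub_mul_sq (contDiff_cgf_of_mem_Icc hm hb) fun t => by
    linarith [(iteratedDeriv_two_cgf_mem_Icc hm hb t).2]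

end CumulantGeneratingFunction

lemma mgf_uniformOn_univ {ι : Type*} [Fintype ι] [MeasurableSpace ι] [MeasurableSingletonClass ι]
    (X : ι → ℝ) (t : ℝ) :
    mgf X (uniformOn univ) t = (1 / Fintype.card ι : ℝ) * ∑ i, exp (t * X i) := by
  rw [mgf, integral_fintype .of_finite]
  simp [measureReal_def, uniformOn_univ, Finset.mul_sum]

section PowerMean

variable {N : ℕ} {z : Fin N → ℝ} {a b : ℝ}

lemma ae_log_mem_Icc (ha : 0 < a) (hz : ∀ i, z i ∈ Set.Icc a b) :
    ∀ᵐ i ∂(uniformOn univ), log (z i) ∈ Set.Icc (log a) (log b) :=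
  ae_of_all _ fun i => ⟨log_le_log ha (hz i).1, log_le_log (ha.trans_le (hz i).1) (hz i).2⟩

lemma cgf_log_uniformOn_univ (hz : ∀ i, 0 < z i) (t : ℝ) :
    cgf (fun i => log (z i)) (uniformOn univ) t = log ((1 / N : ℝ) * ∑ i, z i ^ t) := by
  rw [cgf, mgf_uniformOn_univ, Fintype.card_fin]
  congr 3 with i
  rw [rpow_def_of_pos (hz i), mul_comm]

variable [NeZero N]

lemma pmean_eq_exp_cgf_div (hz : ∀ i, 0 < z i) (t : ℝ) :
    pmean z t = exp (cgf (fun i => log (z i)) (uniformOn univ) t / t) := by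
  have hmean : 0 < (1 / N : ℝ) * ∑ i, z i ^ t := by
    have := Finset.sum_pos (fun i _ => rpow_pos_of_pos (hz i) t) univ_nonempty
    have : (0 : ℝ) < N := by exact_mod_cast Nat.pos_of_neZero N
    positivity
  rw [cgf_log_uniformOn_univ hz, pmean, rpow_def_of_pos hmean, mul_one_div]

lemma pmean_le_pmean (ha : 0 < a) (hz : ∀ i, z i ∈ Set.Icc a b) {p q : ℝ} (hp : p ≠ 0)
    (hq : q ≠ 0) (hpq : p ≤ q) : pmean z p ≤ pmean z q := by
  have hpos i : 0 < z i := ha.trans_le (hz i).1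
  rw [pmean_eq_exp_cgf_div hpos, pmean_eq_exp_cgf_div hpos, exp_le_exp]
  exact (convexOn_cgf_of_mem_Icc .of_discrete (ae_log_mem_Icc ha hz)).div_le_div_of_map_zero
    cgf_zero hp hq hpq

lemma pmean_le_of_le_one (ha : 0 < a) (hz : ∀ i, z i ∈ Set.Icc a b) {q : ℝ} (hq : q ≠ 0)
    (hq1 : q ≤ 1) : pmean z q ≤ b := by
  refine (pmean_le_pmean ha hz hq one_ne_zero hq1).trans ?_
  have hsum : ∑ i, z i ≤ N * b := by
    simpa using Finset.sum_le_sum fun i (_ : i ∈ Finset.univ) => (hz i).2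
  have : (0 : ℝ) < N := by exact_mod_cast Nat.pos_of_neZero N
  simp only [pmean, rpow_one, div_one]
  rw [one_div, inv_mul_le_iff₀ this]
  exact hsum

lemma pmean_sub_pmean_le (ha : 0 < a) (hz : ∀ i, z i ∈ Set.Icc a b) {p q : ℝ} (hp : p ≠ 0)
    (hq : q ≠ 0) (hpq : p ≤ q) (hq1 : q ≤ 1) :
    pmean z q - pmean z p ≤ b * (((log b - log a) / 2) ^ 2 / 2 * (q - p)) := by
  have hpos i : 0 < z i := ha.trans_le (hz i).1
  have hX := ae_log_mem_Icc ha hz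
  have hgap := div_le_div_add_of_concaveOn_sub_mul_sq
    (concaveOn_cgf_sub_of_mem_Icc .of_discrete hX) cgf_zero hp hq hpq
  have hmono := (convexOn_cgf_of_mem_Icc .of_discrete hX).div_le_div_of_map_zero cgf_zero hp hq hpq
  have hb : 0 ≤ b := ha.le.trans ((hz 0).1.trans (hz 0).2)
  calc pmean z q - pmean z p
      ≤ pmean z q * (cgf (fun i => log (z i)) (uniformOn univ) q / q
          - cgf (fun i => log (z i)) (uniformOn univ) p / p) := by
        rw [pmean_eq_exp_cgf_div hpos, pmean_eq_exp_cgf_div hpos]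
        exact exp_sub_exp_le_exp_mul_sub _ _
    _ ≤ b * (((log b - log a) / 2) ^ 2 / 2 * (q - p)) :=
        mul_le_mul (pmean_le_of_le_one ha hz hq hq1) (by linarith) (by linarith) hb

end PowerMean

/-- Warm-start guarantee: over a finite family of vectors with entries in `[H·L, H·U]`
(with `0 < L ≤ U`, `κ = U/L`), a maximizer of the `p`-mean objective is
`((q−p)·U·H·κ·ln κ)`-suboptimal for the `q`-mean objective, for nonzero `p < q ≤ 1`. -/
theorem warm_start_guarantee {N H M : ℕ} (hN : 1 ≤ N) (hH : 1 ≤ H) (hM : 1 ≤ M)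
    (L U : ℝ) (hL : 0 < L) (hLU : L ≤ U) (κ : ℝ) (hκ : κ = U / L)
    (x : Fin M → Fin N → ℝ) (hx : ∀ j i, x j i ∈ Set.Icc ((H : ℝ) * L) ((H : ℝ) * U))
    (p q : ℝ) (hp : p ≠ 0) (hq : q ≠ 0) (hpq : p < q) (hq1 : q ≤ 1)
    (jp : Fin M) (hjp : ∀ j, pmean (x j) p ≤ pmean (x jp) p) :
    (Finset.univ.sup' ⟨⟨0, hM⟩, Finset.mem_univ _⟩ fun j => pmean (x j) q)
        - pmean (x jp) q ≤ (q - p) * U * H * κ * Real.log κ := by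
  have : NeZero N := ⟨by omega⟩
  have hH0 : (0 : ℝ) < H := by exact_mod_cast hH
  have ha : 0 < (H : ℝ) * L := mul_pos hH0 hL
  have hb : 0 < (H : ℝ) * U := mul_pos hH0 (hL.trans_le hLU)
  have hκ1 : 1 ≤ κ := by rw [hκ, le_div_iff₀ hL]; linarith
  have hlogκ : log (H * U) - log (H * L) = log κ := by
    rw [← log_div hb.ne' ha.ne', hκ, mul_div_mul_left _ _ hH0.ne']
  have hconst : (log κ / 2) ^ 2 / 2 ≤ κ * log κ := by
    nlinarith [log_nonneg hκ1, log_le_sub_one_of_pos (zero_lt_one.trans_le hκ1)]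
  have hgap j : pmean (x j) q ≤ pmean (x j) p + (q - p) * U * H * κ * log κ := by
    have h := pmean_sub_pmean_le ha (hx j) hp hq hpq.le hq1
    rw [hlogκ] at h
    have : (H : ℝ) * U * ((log κ / 2) ^ 2 / 2 * (q - p)) ≤ (q - p) * U * H * κ * log κ := by
      rw [show (q - p) * U * H * κ * log κ = H * U * (κ * log κ * (q - p)) by ring]
      gcongr
    linarith
  rw [sub_le_iff_le_add]
  refine Finset.sup'_le _ _ fun j _ => ?_
  calc pmean (x j) q ≤ pmean (x j) p + (q - p) * U * H * κ * log κ := hgap j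
    _ ≤ pmean (x jp) q + (q - p) * U * H * κ * log κ := by
      gcongr
      exact (hjp j).trans (pmean_le_pmean ha (hx jp) hp hq hpq.le)
    _ = _ := add_comm _ _
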